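/- arXiv:2409.18143 — 2 statements merged into one kernel-verified Lean document; each statement's English description precedes it below -/
import Mathlib

section
/- Let l>0 and let u be the vortex map on B_l. For ρ ∈ (0,l) and β ∈ (0,π), let Ω_{ρ,β} := {(r cos α, r sin α) : 0 < r < l, α ∈ [β, 2π−β]} and define v_{ρ,β} on Ω_{ρ,β} in polar coordinates by v_{ρ,β}(r,α) := (cos α, sin α) if r > ρ/2, and v_{ρ,β}(r,α) := (cos((2r/ρ)(α−π)+π), sin((2r/ρ)(α−π)+π)) if 0 ≤ r ≤ ρ/2. Then for any sequences ρ_k → 0⁺ and β_k → 0⁺, ∫_{Ω_{ρ_k,β_k}} |ℳ(∇v_{ρ_k,β_k})| dx → ∫_{B_l} √(1+|∇u|²) dx as k → ∞. -/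
/-!
Since `vMap ρ` takes values in the unit circle, its Jacobian determinant vanishes identically and
only the Dirichlet term of the area integrand survives. Off the positive real axis and the circle
`‖z‖ = ρ / 2` the derivative of `vMap ρ` is bounded by `5 / ‖z‖`: outside that circle `vMap ρ` is
`z / ‖z‖`, and inside it is `exp (i θ)` with `‖dθ‖ ≤ 2 (π + 1) / ρ ≤ (π + 1) / ‖z‖`. This bound is
integrable on the disc because the plane is two-dimensional. At a point off the real axis,
`ρ_k / 2 < ‖z‖` and `β_k ≤ |arg z|` for large `k`, after which the integrand on `Ω_{ρ_k, β_k}`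
coincides with that of the vortex map; dominated convergence concludes.
-/

open MeasureTheory Filter Metric Set
open scoped ENNReal Topology Real

noncomputable section

/-- Squared Frobenius norm of the Jacobian matrix of `v` at `z`. -/
def gradSq (v : ℂ → ℂ) (z : ℂ) : ℝ :=
  ‖fderiv ℝ v z 1‖ ^ 2 + ‖fderiv ℝ v z Complex.I‖ ^ 2

/-- Jacobian determinant of `v` at `z`. -/
def jacDet (v : ℂ → ℂ) (z : ℂ) : ℝ :=
  LinearMap.det ((fderiv ℝ v z).toLinearMap)

/-- The polar angle `α(z) ∈ [0, 2π)` of a nonzero complex number. -/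
def ang (z : ℂ) : ℝ :=
  if 0 ≤ Complex.arg z then Complex.arg z else Complex.arg z + 2 * Real.pi

/-- The domain `Ω_{ρ,β} = {(r cos α, r sin α) : 0 < r < l, α ∈ [β, 2π−β]}`,
written via the principal argument as `{z ≠ 0 : |z| < l, β ≤ |arg z|}`. -/
def OmSet (l β : ℝ) : Set ℂ :=
  {z : ℂ | z ≠ 0 ∧ ‖z‖ < l ∧ β ≤ |Complex.arg z|}

/-- The map `v_{ρ,β}` (in polar coordinates): the identity retraction onto the
circle for `r > ρ/2`, interpolated towards the constant `(-1,0)` for `r ≤ ρ/2`. -/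
def vMap (ρ : ℝ) (z : ℂ) : ℂ :=
  if ρ / 2 < ‖z‖ then ‖z‖⁻¹ • z
  else Complex.exp (Complex.I * ((((2 * ‖z‖ / ρ) * (ang z - Real.pi) + Real.pi : ℝ) : ℂ)))

section UnitNorm

open scoped RealInnerProductSpace

theorem inner_fderiv_eq_zero_of_eventually_norm_eq_one {E F : Type*} [NormedAddCommGroup E]
    [NormedSpace ℝ E] [NormedAddCommGroup F] [InnerProductSpace ℝ F] {f : E → F} {x : E}
    (hf : ∀ᶠ y in 𝓝 x, ‖f y‖ = 1) (h : E) : ⟪f x, fderiv ℝ f x h⟫ = 0 := by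
  by_cases hd : DifferentiableAt ℝ f x
  · have hconst : HasFDerivAt (fun y => ‖f y‖ ^ 2) (0 : E →L[ℝ] ℝ) x :=
      (hasFDerivAt_const 1 x).congr_of_eventuallyEq (hf.mono fun y hy => by simp [hy])
    simpa using congrArg (· h) (hd.hasFDerivAt.norm_sq.unique hconst)
  · simp [fderiv_zero_of_not_differentiableAt hd]

theorem det_fderiv_eq_zero_of_eventually_norm_eq_one {E : Type*} [NormedAddCommGroup E]
    [InnerProductSpace ℝ E] [FiniteDimensional ℝ E] {f : E → E} {x : E}
    (hf : ∀ᶠ y in 𝓝 x, ‖f y‖ = 1) : LinearMap.det (fderiv ℝ f x : E →ₗ[ℝ] E) = 0 := by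
  rw [LinearMap.det_eq_zero_iff_ker_ne_bot, Ne, LinearMap.ker_eq_bot_iff_range_eq_top]
  intro hrange
  obtain ⟨h, hh⟩ : f x ∈ LinearMap.range (fderiv ℝ f x : E →ₗ[ℝ] E) := hrange ▸ Submodule.mem_top
  have := inner_fderiv_eq_zero_of_eventually_norm_eq_one hf h
  simp_all [hf.self_of_nhds]

end UnitNorm

theorem norm_inv_norm_smul_sub_le {E : Type*} [NormedAddCommGroup E] [NormedSpace ℝ E]
    {x : E} (hx : x ≠ 0) (y : E) :
    ‖‖x‖⁻¹ • x - ‖y‖⁻¹ • y‖ ≤ 2 * ‖x - y‖ / ‖x‖ := by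
  have hx' : 0 < ‖x‖ := norm_pos_iff.mpr hx
  have hsplit : ‖x‖⁻¹ • x - ‖y‖⁻¹ • y = ‖x‖⁻¹ • (x - y) + (‖x‖⁻¹ - ‖y‖⁻¹) • y := by
    rw [smul_sub, sub_smul]; abel
  have hsecond : ‖(‖x‖⁻¹ - ‖y‖⁻¹) • y‖ ≤ ‖x - y‖ / ‖x‖ := by
    rcases eq_or_ne y 0 with rfl | hy
    · simp only [smul_zero, norm_zero]; positivity
    have hy' : 0 < ‖y‖ := norm_pos_iff.mpr hy
    rw [norm_smul, Real.norm_eq_abs, inv_sub_inv hx'.ne' hy'.ne', abs_div, abs_mul,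
      abs_of_pos hx', abs_of_pos hy', div_mul_eq_mul_div, mul_div_mul_right _ _ hy'.ne']
    exact div_le_div_of_nonneg_right
      ((abs_norm_sub_norm_le y x).trans_eq (norm_sub_rev y x)) hx'.le
  calc ‖‖x‖⁻¹ • x - ‖y‖⁻¹ • y‖
      ≤ ‖‖x‖⁻¹ • (x - y)‖ + ‖(‖x‖⁻¹ - ‖y‖⁻¹) • y‖ := hsplit ▸ norm_add_le _ _
    _ ≤ ‖x - y‖ / ‖x‖ + ‖x - y‖ / ‖x‖ := by
        gcongr
        rw [norm_smul, norm_inv, norm_norm, inv_mul_eq_div]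
    _ = 2 * ‖x - y‖ / ‖x‖ := by ring

theorem norm_fderiv_inv_norm_smul_le {E : Type*} [NormedAddCommGroup E] [NormedSpace ℝ E]
    {x : E} (hx : x ≠ 0) : ‖fderiv ℝ (fun y : E => ‖y‖⁻¹ • y) x‖ ≤ 4 / ‖x‖ := by
  have hx' : 0 < ‖x‖ := norm_pos_iff.mpr hx
  have hnhds : {y : E | ‖x‖ / 2 < ‖y‖} ∈ 𝓝 x :=
    (isOpen_lt continuous_const continuous_norm).mem_nhds (by simp [hx'])
  have hlip : LipschitzOnWith (Real.toNNReal (4 / ‖x‖)) (fun y : E => ‖y‖⁻¹ • y)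
      {y : E | ‖x‖ / 2 < ‖y‖} := by
    refine LipschitzOnWith.of_dist_le_mul fun y hy y' _ => ?_
    have hy' : 0 < ‖y‖ := (half_pos hx').trans hy
    rw [dist_eq_norm, dist_eq_norm, Real.coe_toNNReal _ (by positivity)]
    calc ‖‖y‖⁻¹ • y - ‖y'‖⁻¹ • y'‖ ≤ 2 * ‖y - y'‖ / ‖y‖ :=
          norm_inv_norm_smul_sub_le (norm_pos_iff.mp hy') y'
      _ ≤ 2 * ‖y - y'‖ / (‖x‖ / 2) := by gcongr; exact hy.le
      _ = 4 / ‖x‖ * ‖y - y'‖ := by field_simp; ring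
  simpa [Real.coe_toNNReal _ (by positivity : (0:ℝ) ≤ 4 / ‖x‖)] using
    norm_fderiv_le_of_lipschitzOn ℝ hnhds hlip

section Angle

open Complex

theorem Complex.hasFDerivAt_arg {x : ℂ} (hx : x ∈ slitPlane) :
    HasFDerivAt arg
      (imCLM.comp ((ContinuousLinearMap.toSpanSingleton ℂ x⁻¹).restrictScalars ℝ)) x := by
  have := imCLM.hasFDerivAt.comp x ((hasDerivAt_log hx).hasFDerivAt.restrictScalars ℝ)
  simpa only [Function.comp_def, imCLM_apply, log_im] using this

theorem Complex.norm_fderiv_arg_le {x : ℂ} (hx : x ∈ slitPlane) : ‖fderiv ℝ arg x‖ ≤ ‖x‖⁻¹ := by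
  rw [(hasFDerivAt_arg hx).fderiv]
  refine ContinuousLinearMap.opNorm_le_bound _ (by positivity) fun h => ?_
  simpa [mul_comm] using abs_im_le_norm (h * x⁻¹)

theorem ang_eq_arg_neg_add_pi {z : ℂ} (hz : -z ∈ slitPlane) : ang z = arg (-z) + π := by
  rw [mem_slitPlane_iff, neg_re, neg_im, neg_pos, ne_eq, neg_eq_zero] at hz
  rcases lt_trichotomy z.im 0 with him | him | him
  · rw [ang, if_neg (not_le.mpr (arg_neg_iff.mpr him)), arg_neg_eq_arg_add_pi_of_im_neg him]
    ring
  · have hre : z.re < 0 := hz.resolve_right (not_not.mpr him)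
    rw [ang, arg_eq_pi_iff.mpr ⟨hre, him⟩, if_pos Real.pi_pos.le,
      arg_eq_zero_iff.mpr ⟨by simp [hre.le], by simp [him]⟩, zero_add]
  · rw [ang, if_pos (arg_nonneg_iff.mpr him.le), arg_neg_eq_arg_sub_pi_of_im_pos him]
    ring

theorem hasFDerivAt_ang {z : ℂ} (hz : -z ∈ slitPlane) :
    HasFDerivAt ang ((fderiv ℝ arg (-z)).comp (-ContinuousLinearMap.id ℝ ℂ)) z := by
  have hev : (fun w => arg (-w) + π) =ᶠ[𝓝 z] ang := by
    filter_upwards [(isOpen_slitPlane.preimage continuous_neg).mem_nhds hz] with w hw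
    exact (ang_eq_arg_neg_add_pi hw).symm
  have harg := (hasFDerivAt_arg hz).differentiableAt.hasFDerivAt
  exact ((harg.comp z (hasFDerivAt_id z).neg).add_const π).congr_of_eventuallyEq hev.symm

theorem norm_fderiv_ang_le {z : ℂ} (hz : -z ∈ slitPlane) : ‖fderiv ℝ ang z‖ ≤ ‖z‖⁻¹ := by
  rw [(hasFDerivAt_ang hz).fderiv]
  calc _ ≤ ‖fderiv ℝ arg (-z)‖ * ‖-ContinuousLinearMap.id ℝ ℂ‖ :=
        ContinuousLinearMap.opNorm_comp_le _ _
    _ ≤ ‖z‖⁻¹ * 1 := by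
        gcongr
        · simpa using norm_fderiv_arg_le hz
        · rw [norm_neg]; exact ContinuousLinearMap.norm_id_le
    _ = ‖z‖⁻¹ := mul_one _

theorem norm_fderiv_cexp_I_mul_le {E : Type*} [NormedAddCommGroup E] [NormedSpace ℝ E]
    {θ : E → ℝ} {z : E} (hθ : DifferentiableAt ℝ θ z) :
    ‖fderiv ℝ (fun w => cexp (I * θ w)) z‖ ≤ ‖fderiv ℝ θ z‖ := by
  have h : HasFDerivAt (fun w => cexp (I * θ w)) _ z :=
    ((ofRealCLM.hasFDerivAt.comp z hθ.hasFDerivAt).const_mul I).cexp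
  rw [h.fderiv]
  refine ContinuousLinearMap.opNorm_le_bound _ (norm_nonneg _) fun v => ?_
  simpa [norm_exp_I_mul_ofReal] using (fderiv ℝ θ z).le_opNorm v

def vPhase (ρ : ℝ) (z : ℂ) : ℝ := 2 * ‖z‖ / ρ * (ang z - π) + π

theorem hasFDerivAt_vPhase {ρ : ℝ} {z : ℂ} (hz : -z ∈ slitPlane) :
    HasFDerivAt (vPhase ρ)
      ((2 / ρ) • (‖z‖ • fderiv ℝ ang z + (ang z - π) • fderiv ℝ (‖·‖) z)) z := by
  have hz0 : z ≠ 0 := by rintro rfl; simp at hz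
  have hnorm : HasFDerivAt (‖·‖) (fderiv ℝ (‖·‖) z) z :=
    ((contDiffAt_norm ℝ hz0 (n := 1)).differentiableAt one_ne_zero).hasFDerivAt
  have hang := (hasFDerivAt_ang hz).differentiableAt.hasFDerivAt
  have hform : vPhase ρ = fun w => 2 / ρ * (‖w‖ * (ang w - π)) + π := by
    funext w; simp only [vPhase]; ring
  rw [hform]
  exact ((hnorm.mul (hang.sub_const π)).const_mul (2 / ρ)).add_const π

theorem norm_fderiv_vPhase_le {ρ : ℝ} (hρ : 0 < ρ) {z : ℂ} (hz : -z ∈ slitPlane) :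
    ‖fderiv ℝ (vPhase ρ) z‖ ≤ 2 * (π + 1) / ρ := by
  have hz0 : z ≠ 0 := by rintro rfl; simp at hz
  have hang : |ang z - π| ≤ π := by
    rw [ang_eq_arg_neg_add_pi hz, add_sub_cancel_right]; exact abs_arg_le_pi _
  have hnorm : ‖fderiv ℝ (‖·‖) z‖ ≤ 1 := by
    simpa using norm_fderiv_le_of_lipschitz ℝ (lipschitzWith_one_norm (E := ℂ)) (x₀ := z)
  rw [(hasFDerivAt_vPhase hz).fderiv, norm_smul, Real.norm_of_nonneg (by positivity)]
  calc 2 / ρ * ‖‖z‖ • fderiv ℝ ang z + (ang z - π) • fderiv ℝ (‖·‖) z‖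
      ≤ 2 / ρ * (‖z‖ * ‖fderiv ℝ ang z‖ + |ang z - π| * ‖fderiv ℝ (‖·‖) z‖) := by
        gcongr
        refine (norm_add_le _ _).trans_eq ?_
        rw [norm_smul, norm_smul, norm_norm, Real.norm_eq_abs]
    _ ≤ 2 / ρ * (‖z‖ * ‖z‖⁻¹ + π * 1) := by
        gcongr
        exact norm_fderiv_ang_le hz
    _ = 2 * (π + 1) / ρ := by
        rw [mul_inv_cancel₀ (norm_ne_zero_iff.mpr hz0)]; ring

end Angle

theorem gradSq_le (v : ℂ → ℂ) (z : ℂ) : gradSq v z ≤ 2 * ‖fderiv ℝ v z‖ ^ 2 := by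
  have h1 := (fderiv ℝ v z).le_opNorm 1
  have hI := (fderiv ℝ v z).le_opNorm Complex.I
  rw [norm_one, mul_one] at h1
  rw [Complex.norm_I, mul_one] at hI
  rw [gradSq, two_mul]
  gcongr

theorem sqrt_one_add_gradSq_le (v : ℂ → ℂ) (z : ℂ) :
    √(1 + gradSq v z) ≤ 1 + 2 * ‖fderiv ℝ v z‖ := by
  refine Real.sqrt_le_iff.mpr ⟨by positivity, ?_⟩
  nlinarith [gradSq_le v z, norm_nonneg (fderiv ℝ v z)]

theorem Filter.EventuallyEq.gradSq_eq {v w : ℂ → ℂ} {z : ℂ} (h : v =ᶠ[𝓝 z] w) :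
    gradSq v z = gradSq w z := by
  rw [gradSq, gradSq, h.fderiv_eq]

theorem measurable_gradSq (v : ℂ → ℂ) : Measurable (gradSq v) :=
  ((measurable_fderiv_apply_const ℝ v 1).norm.pow_const 2).add
    ((measurable_fderiv_apply_const ℝ v Complex.I).norm.pow_const 2)

section vMap

variable {ρ : ℝ}

theorem norm_vMap (hρ : 0 < ρ) (z : ℂ) : ‖vMap ρ z‖ = 1 := by
  unfold vMap
  split_ifs with h
  · exact norm_smul_inv_norm (norm_pos_iff.mp ((half_pos hρ).trans h))
  · exact Complex.norm_exp_I_mul_ofReal _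

theorem jacDet_vMap (hρ : 0 < ρ) (z : ℂ) : jacDet (vMap ρ) z = 0 :=
  det_fderiv_eq_zero_of_eventually_norm_eq_one (.of_forall (norm_vMap hρ))

theorem vMap_eventuallyEq_of_lt {z : ℂ} (hz : ρ / 2 < ‖z‖) :
    vMap ρ =ᶠ[𝓝 z] fun w => ‖w‖⁻¹ • w := by
  filter_upwards [(isOpen_lt continuous_const continuous_norm).mem_nhds hz] with w hw
  exact if_pos hw

theorem vMap_eventuallyEq_of_gt {z : ℂ} (hz : ‖z‖ < ρ / 2) :
    vMap ρ =ᶠ[𝓝 z] fun w => Complex.exp (Complex.I * vPhase ρ w) := by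
  filter_upwards [(isOpen_lt continuous_norm continuous_const).mem_nhds hz] with w hw
  exact if_neg hw.not_gt

theorem norm_fderiv_vMap_le (hρ : 0 < ρ) {z : ℂ} (hz : -z ∈ Complex.slitPlane)
    (hzρ : ‖z‖ ≠ ρ / 2) : ‖fderiv ℝ (vMap ρ) z‖ ≤ 5 / ‖z‖ := by
  have hz0 : z ≠ 0 := by rintro rfl; simp at hz
  rcases hzρ.lt_or_gt with hin | hout
  · rw [(vMap_eventuallyEq_of_gt hin).fderiv_eq]
    calc _ ≤ ‖fderiv ℝ (vPhase ρ) z‖ :=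
          norm_fderiv_cexp_I_mul_le (hasFDerivAt_vPhase hz).differentiableAt
      _ ≤ 2 * (π + 1) / ρ := norm_fderiv_vPhase_le hρ hz
      _ ≤ 2 * (π + 1) / (2 * ‖z‖) := by gcongr; linarith
      _ ≤ 5 / ‖z‖ := by
          rw [mul_div_mul_left _ _ two_ne_zero]; gcongr; linarith [Real.pi_le_four]
  · rw [(vMap_eventuallyEq_of_lt hout).fderiv_eq]
    exact (norm_fderiv_inv_norm_smul_le hz0).trans (by gcongr; norm_num)

end vMap

theorem ae_im_ne_zero : ∀ᵐ z : ℂ, z.im ≠ 0 := by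
  have hker : {z : ℂ | z.im = 0} = (LinearMap.ker Complex.imLm : Submodule ℝ ℂ) := by
    ext z; simp
  have hnull : volume {z : ℂ | z.im = 0} = 0 := by
    rw [hker]
    refine Measure.addHaar_submodule _ _ fun htop => ?_
    have : Complex.I ∈ LinearMap.ker Complex.imLm := htop ▸ Submodule.mem_top
    simp at this
  exact measure_eq_zero_iff_ae_notMem.mp hnull

theorem ae_norm_ne (r : ℝ) : ∀ᵐ z : ℂ, ‖z‖ ≠ r := by
  have hnull : volume {z : ℂ | ‖z‖ = r} = 0 := by
    simpa [sphere, dist_zero_right] using Measure.addHaar_sphere volume (0 : ℂ) r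
  exact measure_eq_zero_iff_ae_notMem.mp hnull

theorem integrableOn_inv_norm_ball (l : ℝ) :
    IntegrableOn (fun z : ℂ => ‖z‖⁻¹) (ball 0 l) := by
  refine integrableOn_ball_of_norm_le_rpow (C := 1) (α := 1) (by simp) (by simp)
    (.of_forall fun z => ?_) measurable_norm.inv.aestronglyMeasurable
  simp [Real.rpow_neg_one]

theorem measurableSet_omSet (l β : ℝ) : MeasurableSet (OmSet l β) :=
  (measurableSet_singleton 0).compl.inter
    ((measurableSet_lt measurable_norm measurable_const).inter
      (measurableSet_le measurable_const Complex.measurable_arg.abs))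

theorem omSet_subset_ball (l β : ℝ) : OmSet l β ⊆ ball 0 l :=
  fun _ hz => mem_ball_zero_iff.mpr hz.2.1

theorem gradSq_vMap_of_lt {u : ℂ → ℂ} (hu : ∀ z, z ≠ 0 → u z = ‖z‖⁻¹ • z) {ρ : ℝ} (hρ : 0 < ρ)
    {z : ℂ} (hz : ρ / 2 < ‖z‖) : gradSq (vMap ρ) z = gradSq u z := by
  have hu' : u =ᶠ[𝓝 z] fun w => ‖w‖⁻¹ • w :=
    (eventually_ne_nhds (norm_pos_iff.mp ((half_pos hρ).trans hz))).mono hu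
  exact ((vMap_eventuallyEq_of_lt hz).trans hu'.symm).gradSq_eq

theorem ae_sqrt_one_add_gradSq_vMap_le {ρ : ℝ} (hρ : 0 < ρ) :
    ∀ᵐ z : ℂ, √(1 + gradSq (vMap ρ) z) ≤ 1 + 10 * ‖z‖⁻¹ := by
  filter_upwards [ae_im_ne_zero, ae_norm_ne (ρ / 2)] with z hzim hzρ
  have hslit : -z ∈ Complex.slitPlane := by simpa [Complex.mem_slitPlane_iff] using Or.inr hzim
  calc _ ≤ 1 + 2 * ‖fderiv ℝ (vMap ρ) z‖ := sqrt_one_add_gradSq_le _ _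
    _ ≤ 1 + 2 * (5 / ‖z‖) := by gcongr; exact norm_fderiv_vMap_le hρ hslit hzρ
    _ = 1 + 10 * ‖z‖⁻¹ := by ring

theorem eventually_indicator_omSet_eq {u : ℂ → ℂ} (hu : ∀ z, z ≠ 0 → u z = ‖z‖⁻¹ • z)
    {l : ℝ} {ρs βs : ℕ → ℝ} (hρ : ∀ k, 0 < ρs k) (hρ0 : Tendsto ρs atTop (𝓝 0))
    (hβ0 : Tendsto βs atTop (𝓝 0)) {z : ℂ} (hzl : z ∈ ball 0 l) (hzim : z.im ≠ 0) :
    ∀ᶠ k in atTop, (OmSet l (βs k)).indicator (fun z => √(1 + gradSq (vMap (ρs k)) z)) z =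
      √(1 + gradSq u z) := by
  have hz0 : z ≠ 0 := fun h => hzim (by simp [h])
  have harg : 0 < |Complex.arg z| := abs_pos.mpr fun h => hzim (Complex.arg_eq_zero_iff.mp h).2
  filter_upwards [hρ0.eventually (gt_mem_nhds (by positivity : 0 < 2 * ‖z‖)),
    hβ0.eventually (gt_mem_nhds harg)] with k hρk hβk
  rw [indicator_of_mem (show z ∈ OmSet l (βs k) from ⟨hz0, mem_ball_zero_iff.mp hzl, hβk.le⟩),
    gradSq_vMap_of_lt hu (hρ k) (by linarith)]

theorem area_vMap_tendsto_area_vortex_general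
    (l : ℝ) (u : ℂ → ℂ)
    (hu : ∀ z : ℂ, z ≠ 0 → u z = ‖z‖⁻¹ • z)
    (ρs βs : ℕ → ℝ)
    (hρ : ∀ k, ρs k ∈ Ioo (0 : ℝ) l)
    (hρ0 : Tendsto ρs atTop (nhds 0)) (hβ0 : Tendsto βs atTop (nhds 0)) :
    Tendsto (fun k => ∫ z in OmSet l (βs k),
        Real.sqrt (1 + gradSq (vMap (ρs k)) z + jacDet (vMap (ρs k)) z ^ 2))
      atTop
      (nhds (∫ z in ball (0 : ℂ) l, Real.sqrt (1 + gradSq u z))) := by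
  have hρpos k : 0 < ρs k := (hρ k).1
  have hrestrict k : ∫ z in OmSet l (βs k),
      √(1 + gradSq (vMap (ρs k)) z + jacDet (vMap (ρs k)) z ^ 2) =
      ∫ z in ball 0 l, (OmSet l (βs k)).indicator (fun z => √(1 + gradSq (vMap (ρs k)) z)) z := by
    rw [setIntegral_indicator (measurableSet_omSet l _),
      inter_eq_right.mpr (omSet_subset_ball l _)]
    simp [jacDet_vMap (hρpos k)]
  simp only [hrestrict]
  refine tendsto_integral_of_dominated_convergence (fun z => 1 + 10 * ‖z‖⁻¹)
    (fun k => (((measurable_gradSq _).const_add 1).sqrt.indicator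
      (measurableSet_omSet l _)).aestronglyMeasurable)
    ((integrableOn_const measure_ball_lt_top.ne).add ((integrableOn_inv_norm_ball l).const_mul 10))
    (fun k => ?_) ?_
  · filter_upwards [ae_restrict_of_ae (ae_sqrt_one_add_gradSq_vMap_le (hρpos k))] with z hz
    rw [Real.norm_of_nonneg (indicator_nonneg (fun _ _ => Real.sqrt_nonneg _) z)]
    exact (indicator_le_self' (fun _ _ => Real.sqrt_nonneg _) z).trans hz
  · filter_upwards [ae_restrict_mem measurableSet_ball, ae_restrict_of_ae ae_im_ne_zero]
      with z hzl hzim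
    exact (tendsto_congr' (eventually_indicator_omSet_eq hu hρpos hρ0 hβ0 hzl hzim)).mpr
      tendsto_const_nhds

/-- convergence of the areas of the graphs of `v_{ρ_k,β_k}` to
the area of the graph of the vortex map. -/
theorem area_vMap_tendsto_area_vortex
    (l : ℝ) (hl : 0 < l) (u : ℂ → ℂ)
    (hu : ∀ z : ℂ, z ≠ 0 → u z = ‖z‖⁻¹ • z)
    (ρs βs : ℕ → ℝ)
    (hρ : ∀ k, ρs k ∈ Ioo (0 : ℝ) l) (hβ : ∀ k, βs k ∈ Ioo (0 : ℝ) Real.pi)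
    (hρ0 : Tendsto ρs atTop (nhds 0)) (hβ0 : Tendsto βs atTop (nhds 0)) :
    Tendsto (fun k => ∫ z in OmSet l (βs k),
        Real.sqrt (1 + gradSq (vMap (ρs k)) z + jacDet (vMap (ρs k)) z ^ 2))
      atTop
      (nhds (∫ z in ball (0 : ℂ) l, Real.sqrt (1 + gradSq u z))) :=
  area_vMap_tendsto_area_vortex_general l u hu ρs βs hρ hρ0 hβ0
end
end

section
/- Let l>0 and let u be the vortex map on B_l. For each integer k ≥ 1 let φ_k : [0,l] → [0,1] be a smooth function with φ_k = 0 on [0,1/k²], φ_k = 1 on [1/k, l], and 0 ≤ φ_k′ ≤ 2k, and define u_k(x) := φ_k(|x|)·x/|x| for x ≠ 0, u_k(0) := 0. Then u_k → u in L¹(B_l,ℝ²) and lim_{k→∞} 𝒜(u_k, B_l) = ∫_{B_l} √(1+|∇u|²) dx + π. Consequently, for every l > 0, the relaxed area satisfies Ā(u, B_l) ≤ ∫_{B_l} √(1+|∇u|²) dx + π. -/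
open MeasureTheory Filter Metric Set
open scoped ENNReal Topology Real

noncomputable section

/-- Area functional `𝒜(v,A) = ∫_A √(1 + |∇v|² + (det ∇v)²)`. -/
def areaFun (v : ℂ → ℂ) (A : Set ℂ) : ℝ :=
  ∫ z in A, Real.sqrt (1 + gradSq v z + jacDet v z ^ 2)

/-- The `L¹`-relaxed area functional. -/
def relaxedArea (v : ℂ → ℂ) (Ω : Set ℂ) : ℝ≥0∞ :=
  sInf {a : ℝ≥0∞ | ∃ w : ℕ → ℂ → ℂ,
    (∀ k, ContDiffOn ℝ 1 (w k) Ω) ∧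
    Tendsto (fun k => ∫ z in Ω, ‖w k z - v z‖) atTop (nhds 0) ∧
    a = Filter.liminf (fun k => ENNReal.ofReal (areaFun (w k) Ω)) atTop}

/-- The truncated maps `u_k(x) = φ_k(|x|)·x/|x|`. -/
def truncMap (φ : ℕ → ℝ → ℝ) (k : ℕ) (z : ℂ) : ℂ :=
  if z = 0 then 0 else (φ k ‖z‖ * ‖z‖⁻¹) • z

/-! ### Auxiliary lemmas -/

lemma truncMap_eq (φ : ℕ → ℝ → ℝ) (k : ℕ) :
    truncMap φ k = fun z : ℂ => (φ k ‖z‖ * ‖z‖⁻¹) • z := by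
  funext z
  rcases eq_or_ne z 0 with rfl | hz
  · simp [truncMap]
  · simp [truncMap, hz]

def normD (z : ℂ) : ℂ →L[ℝ] ℝ :=
  ‖z‖⁻¹ • ((z.re • Complex.reCLM) + (z.im • Complex.imCLM))

lemma hasFDerivAt_norm' {z : ℂ} (hz : z ≠ 0) :
    HasFDerivAt (fun w : ℂ => ‖w‖) (normD z) z := by
  have hq : HasFDerivAt (fun w : ℂ => w.re * w.re + w.im * w.im)
      ((2 * z.re) • (Complex.reCLM : ℂ →L[ℝ] ℝ) + (2 * z.im) • Complex.imCLM) z := by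
    have h1 := (Complex.reCLM.hasFDerivAt (x := z)).mul (Complex.reCLM.hasFDerivAt (x := z))
    have h2 := (Complex.imCLM.hasFDerivAt (x := z)).mul (Complex.imCLM.hasFDerivAt (x := z))
    have := h1.add h2
    refine this.congr_fderiv ?_
    ext w <;> simp <;> ring
  have hqz : z.re * z.re + z.im * z.im ≠ 0 := by
    have := Complex.normSq_pos.2 hz
    simpa [Complex.normSq_apply] using this.ne'
  have hs := (Real.hasDerivAt_sqrt hqz).comp_hasFDerivAt z hq
  have : (fun w : ℂ => ‖w‖) = fun w : ℂ => Real.sqrt (w.re * w.re + w.im * w.im) := by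
    funext w
    rw [Complex.norm_def, Complex.normSq_apply]
  rw [this]
  refine hs.congr_fderiv ?_
  have hnorm : ‖z‖ = Real.sqrt (z.re * z.re + z.im * z.im) := by
    rw [Complex.norm_def, Complex.normSq_apply]
  ext w <;> simp [normD, hnorm] <;> ring

def radD (ψ : ℝ → ℝ) (z : ℂ) : ℂ →L[ℝ] ℂ :=
  (ψ ‖z‖ * ‖z‖⁻¹) • ContinuousLinearMap.id ℝ ℂ +
    (ψ ‖z‖ • -(‖z‖ ^ 2)⁻¹ • normD z + ‖z‖⁻¹ • deriv ψ ‖z‖ • normD z).smulRight z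

lemma hasFDerivAt_radial (ψ : ℝ → ℝ) {z : ℂ} (hz : z ≠ 0)
    (hψ : DifferentiableAt ℝ ψ ‖z‖) :
    HasFDerivAt (fun w : ℂ => (ψ ‖w‖ * ‖w‖⁻¹) • w) (radD ψ z) z := by
  have hn : ‖z‖ ≠ 0 := norm_ne_zero_iff.2 hz
  have h0 := hasFDerivAt_norm' hz
  have h1 : HasFDerivAt (fun w : ℂ => ψ ‖w‖) (deriv ψ ‖z‖ • normD z) z :=
    (hψ.hasDerivAt).comp_hasFDerivAt z h0
  have h2 : HasFDerivAt (fun w : ℂ => ‖w‖⁻¹) (-(‖z‖ ^ 2)⁻¹ • normD z) z :=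
    (hasDerivAt_inv hn).comp_hasFDerivAt z h0
  exact (h1.mul h2).smul (hasFDerivAt_id z)

lemma det_clm (T : ℂ →L[ℝ] ℂ) :
    LinearMap.det (T.toLinearMap) = (T 1).re * (T Complex.I).im - (T 1).im * (T Complex.I).re := by
  rw [← LinearMap.det_toMatrix Complex.basisOneI, Matrix.det_fin_two]
  simp [LinearMap.toMatrix_apply, Complex.coe_basisOneI_repr]
  ring

lemma radD_components (ψ : ℝ → ℝ) {z : ℂ} (hz : z ≠ 0) :
    (radD ψ z 1).re = ψ ‖z‖ / ‖z‖ + ((deriv ψ ‖z‖ * ‖z‖ - ψ ‖z‖)/‖z‖^3) * z.re^2 ∧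
    (radD ψ z 1).im = ((deriv ψ ‖z‖ * ‖z‖ - ψ ‖z‖)/‖z‖^3) * z.re * z.im ∧
    (radD ψ z Complex.I).re = ((deriv ψ ‖z‖ * ‖z‖ - ψ ‖z‖)/‖z‖^3) * z.re * z.im ∧
    (radD ψ z Complex.I).im = ψ ‖z‖ / ‖z‖ + ((deriv ψ ‖z‖ * ‖z‖ - ψ ‖z‖)/‖z‖^3) * z.im^2 := by
  have hn : ‖z‖ ≠ 0 := norm_ne_zero_iff.2 hz
  have hn' : ‖z‖ ≠ 0 := hn
  refine ⟨?_, ?_, ?_, ?_⟩ <;>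
    (simp [radD, normD, ← Complex.ofReal_pow]; try (field_simp; ring)) <;> tauto

lemma gradSq_jacDet_radial (ψ : ℝ → ℝ) {z : ℂ} (hz : z ≠ 0)
    (hψ : DifferentiableAt ℝ ψ ‖z‖)
    (F : ℂ → ℂ) (hF : F =ᶠ[𝓝 z] fun w => (ψ ‖w‖ * ‖w‖⁻¹) • w) :
    gradSq F z = deriv ψ ‖z‖ ^ 2 + (ψ ‖z‖ / ‖z‖) ^ 2 ∧
    jacDet F z = deriv ψ ‖z‖ * (ψ ‖z‖ / ‖z‖) := by
  have hn : ‖z‖ ≠ 0 := norm_ne_zero_iff.2 hz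
  have hfd : fderiv ℝ F z = radD ψ z := by
    rw [hF.fderiv_eq]
    exact (hasFDerivAt_radial ψ hz hψ).fderiv
  obtain ⟨e1, e2, e3, e4⟩ := radD_components ψ hz
  have hr2 : z.re^2 + z.im^2 = ‖z‖^2 := by
    rw [Complex.sq_norm, Complex.normSq_apply]; ring
  have hnsq : ∀ w : ℂ, ‖w‖^2 = w.re^2 + w.im^2 := fun w => by
    rw [Complex.sq_norm, Complex.normSq_apply]; ring
  set r := ‖z‖ with hr
  set a := deriv ψ r
  set b := ψ r
  set x := z.re
  set y := z.im
  set s := (a * r - b)/r^3 with hs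
  constructor
  · rw [gradSq, hfd, hnsq, hnsq, e1, e2, e3, e4]
    have expand : (b / r + s * x ^ 2) ^ 2 + (s * x * y) ^ 2 +
        ((s * x * y) ^ 2 + (b / r + s * y ^ 2) ^ 2)
        = 2*(b/r)^2 + 2*(b/r)*s*(x^2+y^2) + s^2*(x^2+y^2)^2 := by ring
    rw [expand, hr2]
    have hsr : s * r^2 = a - b/r := by rw [hs]; field_simp
    have expand2 : 2*(b/r)^2 + 2*(b/r)*s*(r^2) + s^2*(r^2)^2
        = 2*(b/r)^2 + 2*(b/r)*(s*r^2) + (s*r^2)^2 := by ring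
    rw [expand2, hsr]
    field_simp
    ring
  · rw [jacDet, hfd, det_clm, e1, e2, e3, e4]
    have expand : (b / r + s * x ^ 2) * (b / r + s * y ^ 2) -
        s * x * y * (s * x * y)
        = (b/r)^2 + (b/r)*s*(x^2+y^2) := by ring
    rw [expand, hr2]
    have hsr : s * r^2 = a - b/r := by rw [hs]; field_simp
    have expand2 : (b/r)^2 + (b/r)*s*(r^2) = (b/r)^2 + (b/r)*(s*r^2) := by ring
    rw [expand2, hsr]
    field_simp
    ring

lemma contDiff_radial (ψ : ℝ → ℝ) (hψ : ContDiff ℝ (⊤ : ℕ∞) ψ) (ε : ℝ) (hε : 0 < ε)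
    (h0 : ∀ t ∈ Icc (0:ℝ) ε, ψ t = 0) :
    ContDiff ℝ 1 (fun z : ℂ => (ψ ‖z‖ * ‖z‖⁻¹) • z) := by
  rw [contDiff_iff_contDiffAt]
  intro z
  rcases eq_or_ne z 0 with rfl | hz
  · have hev : (fun z : ℂ => (ψ ‖z‖ * ‖z‖⁻¹) • z) =ᶠ[𝓝 (0:ℂ)] (fun _ => (0:ℂ)) := by
      filter_upwards [Metric.ball_mem_nhds (0:ℂ) hε] with w hw
      have h1 : ψ ‖w‖ = 0 := h0 _ ⟨norm_nonneg w, le_of_lt (by simpa using hw)⟩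
      have h2 : ψ ‖w‖ * ‖w‖⁻¹ = 0 := by rw [h1]; ring
      rw [h2, zero_smul]
    exact (contDiffAt_const (c := (0:ℂ))).congr_of_eventuallyEq hev
  · have hn : ‖z‖ ≠ 0 := norm_ne_zero_iff.2 hz
    have hnorm : ContDiffAt ℝ 1 (fun w : ℂ => ‖w‖) z := contDiffAt_norm ℝ hz
    exact (((hψ.of_le (by simp)).contDiffAt.comp z hnorm).mul (hnorm.inv hn)).smul contDiffAt_id

lemma radial_integral (f : ℂ → ℝ) (g G : ℝ → ℝ) (l C : ℝ) (hl : 0 < l)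
    (hfg : ∀ z : ℂ, z ≠ 0 → ‖z‖ < l → f z = g ‖z‖)
    (hG : ∀ r ∈ Ioo (0:ℝ) l, r * g r = G r)
    (hGc : ContinuousOn G (Ioo 0 l))
    (hbd : ∀ r ∈ Ioo (0:ℝ) l, |G r| ≤ C) :
    ∫ z in ball (0:ℂ) l, f z = (2 * Real.pi) * ∫ r in Ioo (0:ℝ) l, G r := by
  have h1 : ∫ z in ball (0:ℂ) l, f z = ∫ z, (ball (0:ℂ) l).indicator f z :=
    (integral_indicator measurableSet_ball).symm
  rw [h1, ← Complex.integral_comp_polarCoord_symm]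
  have htarget : polarCoord.target = Ioi (0:ℝ) ×ˢ Ioo (-Real.pi) Real.pi := rfl
  rw [htarget]
  have key : ∀ p ∈ Ioi (0:ℝ) ×ˢ Ioo (-Real.pi) Real.pi,
      p.1 • (ball (0:ℂ) l).indicator f (Complex.polarCoord.symm p)
      = (Ioo (0:ℝ) l ×ˢ Ioo (-Real.pi) Real.pi).indicator (fun p => G p.1) p := by
    rintro ⟨r, θ⟩ ⟨hr, hθ⟩
    simp only [mem_Ioi] at hr
    have habs : ‖Complex.polarCoord.symm (r, θ)‖ = r := by
      rw [Complex.norm_polarCoord_symm]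
      exact abs_of_pos hr
    have hzne : Complex.polarCoord.symm (r, θ) ≠ 0 := by
      intro h
      rw [h] at habs
      simp at habs
      exact hr.ne' habs.symm
    by_cases hrl : r < l
    · rw [indicator_of_mem (by rw [mem_ball, dist_zero_right, habs]; exact hrl),
        indicator_of_mem (by exact ⟨⟨hr, hrl⟩, hθ⟩)]
      rw [hfg _ hzne (by rwa [habs]), habs, smul_eq_mul]
      exact hG r ⟨hr, hrl⟩
    · rw [indicator_of_notMem
          (fun h => hrl (by rwa [mem_ball, dist_zero_right, habs] at h)),
        indicator_of_notMem (by simp [hrl])]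
      simp
  rw [setIntegral_congr_fun (measurableSet_Ioi.prod measurableSet_Ioo) key]
  rw [integral_indicator (measurableSet_Ioo.prod measurableSet_Ioo)]
  have hSfin : volume (Ioo (0:ℝ) l ×ˢ Ioo (-Real.pi) Real.pi) ≠ ⊤ := by
    rw [Measure.volume_eq_prod, Measure.prod_prod, Real.volume_Ioo, Real.volume_Ioo]
    exact ENNReal.mul_ne_top ENNReal.ofReal_ne_top ENNReal.ofReal_ne_top
  have hmS : MeasurableSet (Ioo (0:ℝ) l ×ˢ Ioo (-Real.pi) Real.pi) :=
    measurableSet_Ioo.prod measurableSet_Ioo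
  have hm : AEStronglyMeasurable (fun p : ℝ × ℝ => G p.1)
      (volume.restrict (Ioo (0:ℝ) l ×ˢ Ioo (-Real.pi) Real.pi)) :=
    (hGc.comp continuousOn_fst (fun p hp => hp.1)).aestronglyMeasurable hmS
  have hbdd : ∀ᵐ p ∂(volume.restrict (Ioo (0:ℝ) l ×ˢ Ioo (-Real.pi) Real.pi)),
      ‖(fun p : ℝ × ℝ => G p.1) p‖ ≤ C := by
    rw [ae_restrict_iff' hmS]
    exact Filter.Eventually.of_forall fun p hp => by
      simpa [Real.norm_eq_abs] using hbd p.1 hp.1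
  have hint : IntegrableOn (fun p : ℝ × ℝ => G p.1)
      (Ioo (0:ℝ) l ×ˢ Ioo (-Real.pi) Real.pi) :=
    ⟨hm, HasFiniteIntegral.restrict_of_bounded C hSfin.lt_top hbdd⟩
  have hsub : Ioo (0:ℝ) l ×ˢ Ioo (-Real.pi) Real.pi ⊆ Ioi (0:ℝ) ×ˢ Ioo (-Real.pi) Real.pi :=
    prod_mono Ioo_subset_Ioi_self subset_rfl
  rw [Measure.restrict_restrict hmS, Set.inter_eq_self_of_subset_left hsub]
  rw [Measure.volume_eq_prod] at hint ⊢
  rw [setIntegral_prod _ hint]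
  simp only [setIntegral_const, Real.volume_Ioo]
  have h2pi : volume.real (Ioo (-Real.pi) Real.pi) = 2 * Real.pi := by
    rw [Real.volume_real_Ioo_of_le (by linarith [Real.pi_pos])]
    ring
  rw [h2pi]
  simp only [smul_eq_mul]
  rw [integral_const_mul]

lemma oneD (ψ : ℝ → ℝ) (l c : ℝ) (hl : 0 < l) (hc : 0 < c) (hcl : c ≤ l) (hc1 : c ≤ 1)
    (hψ : ContDiff ℝ (⊤ : ℕ∞) ψ)
    (hval : ∀ t ∈ Icc (0:ℝ) l, ψ t ∈ Icc (0:ℝ) 1)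
    (hzero : ψ 0 = 0)
    (hone : ∀ t ∈ Icc c l, ψ t = 1)
    (hd0 : ∀ t ∈ Icc (0:ℝ) l, 0 ≤ deriv ψ t)
    (hd2 : ∀ t ∈ Icc (0:ℝ) l, deriv ψ t ≤ 2 / c) :
    (∫ r in Ioo (0:ℝ) l, Real.sqrt ((1 + deriv ψ r^2) * (r^2 + ψ r^2)))
      = (∫ r in (0:ℝ)..c, Real.sqrt ((1 + deriv ψ r^2) * (r^2 + ψ r^2)))
        + ∫ r in c..l, Real.sqrt (1 + r^2) ∧
    1/2 ≤ (∫ r in (0:ℝ)..c, Real.sqrt ((1 + deriv ψ r^2) * (r^2 + ψ r^2))) ∧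
    (∫ r in (0:ℝ)..c, Real.sqrt ((1 + deriv ψ r^2) * (r^2 + ψ r^2))) ≤ 1/2 + 4*c := by
  set G : ℝ → ℝ := fun r => Real.sqrt ((1 + deriv ψ r^2) * (r^2 + ψ r^2)) with hGdef
  have hdiff : Differentiable ℝ ψ := hψ.differentiable (by simp)
  have hdc : Continuous (deriv ψ) := hψ.continuous_deriv (by simp)
  have hGc : Continuous G := by
    apply Real.continuous_sqrt.comp
    exact (continuous_const.add (hdc.pow 2)).mul
      ((continuous_pow 2).add (hψ.continuous.pow 2))
  have hpc : Continuous (fun t => deriv ψ t * ψ t) := hdc.mul hψ.continuous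
  have hp : ∀ t : ℝ, HasDerivAt (fun t => ψ t^2/2) (deriv ψ t * ψ t) t := by
    intro t
    have h := ((hdiff t).hasDerivAt.pow 2).div_const 2
    refine h.congr_deriv ?_
    simp
    ring
  have hFTC : ∫ t in (0:ℝ)..c, deriv ψ t * ψ t = 1/2 := by
    rw [intervalIntegral.integral_eq_sub_of_hasDerivAt (fun t _ => hp t)
      (hpc.intervalIntegrable _ _)]
    rw [hone c ⟨le_refl c, hcl⟩, hzero]
    norm_num
  have hlow : ∀ t ∈ Icc (0:ℝ) c, deriv ψ t * ψ t ≤ G t := by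
    intro t ht
    have h1 : (deriv ψ t * ψ t)^2 ≤ (1 + deriv ψ t^2) * (t^2 + ψ t^2) := by nlinarith
    calc deriv ψ t * ψ t ≤ |deriv ψ t * ψ t| := le_abs_self _
      _ = Real.sqrt ((deriv ψ t * ψ t)^2) := (Real.sqrt_sq_eq_abs _).symm
      _ ≤ G t := Real.sqrt_le_sqrt h1
  have hup : ∀ t ∈ Icc (0:ℝ) c, G t ≤ deriv ψ t * ψ t + 4 := by
    intro t ht
    have htl : t ∈ Icc (0:ℝ) l := ⟨ht.1, ht.2.trans hcl⟩
    have hb := hval t htl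
    have hd0' := hd0 t htl
    have hd2' := hd2 t htl
    have hdt : deriv ψ t * t ≤ 2 := by
      calc deriv ψ t * t ≤ (2/c) * t := by nlinarith [ht.1]
        _ ≤ (2/c) * c := by
            have : (0:ℝ) < 2/c := by positivity
            nlinarith [ht.2]
        _ = 2 := by field_simp
    have h1 : (1 + deriv ψ t^2) * (t^2 + ψ t^2) ≤ ((1 + deriv ψ t) * (t + ψ t))^2 := by
      nlinarith [mul_nonneg (mul_nonneg ht.1 hb.1) (sq_nonneg (deriv ψ t)),
        mul_nonneg ht.1 hb.1, mul_nonneg hd0' (sq_nonneg (t + ψ t))]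
    have h2 : G t ≤ (1 + deriv ψ t) * (t + ψ t) := by
      calc G t ≤ Real.sqrt (((1 + deriv ψ t) * (t + ψ t))^2) := Real.sqrt_le_sqrt h1
        _ = |(1 + deriv ψ t) * (t + ψ t)| := Real.sqrt_sq_eq_abs _
        _ = (1 + deriv ψ t) * (t + ψ t) := by
            rw [abs_of_nonneg]
            nlinarith [ht.1, hb.1, hd0']
    calc G t ≤ (1 + deriv ψ t) * (t + ψ t) := h2
      _ = deriv ψ t * ψ t + (t + ψ t + deriv ψ t * t) := by ring
      _ ≤ deriv ψ t * ψ t + (1 + 1 + 2) := by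
          have := hb.2
          have := ht.2
          nlinarith [ht.1, hb.1]
      _ = deriv ψ t * ψ t + 4 := by norm_num
  have hGint : ∀ a b : ℝ, IntervalIntegrable G volume a b := fun a b =>
    hGc.intervalIntegrable a b
  have hcl' : c ≤ l := hcl
  have e2 : (∫ r in c..l, G r) = ∫ r in c..l, Real.sqrt (1 + r^2) := by
    rw [intervalIntegral.integral_of_le hcl', intervalIntegral.integral_of_le hcl',
      integral_Ioc_eq_integral_Ioo, integral_Ioc_eq_integral_Ioo]
    apply setIntegral_congr_fun measurableSet_Ioo
    intro r hr
    have hψr : ψ r = 1 := hone r ⟨hr.1.le, hr.2.le⟩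
    have hdr : deriv ψ r = 0 := by
      have hev : ψ =ᶠ[𝓝 r] (fun _ => 1) := by
        filter_upwards [Ioo_mem_nhds hr.1 hr.2] with x hx
        exact hone x ⟨hx.1.le, hx.2.le⟩
      rw [hev.deriv_eq, deriv_const]
    simp only [hGdef, hψr, hdr]
    norm_num
    rw [add_comm]
  constructor
  · calc (∫ r in Ioo (0:ℝ) l, G r)
        = ∫ r in (0:ℝ)..l, G r := by
          rw [intervalIntegral.integral_of_le hl.le, integral_Ioc_eq_integral_Ioo]
      _ = (∫ r in (0:ℝ)..c, G r) + ∫ r in c..l, G r :=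
          (intervalIntegral.integral_add_adjacent_intervals (hGint 0 c) (hGint c l)).symm
      _ = (∫ r in (0:ℝ)..c, G r) + ∫ r in c..l, Real.sqrt (1 + r^2) := by rw [e2]
  constructor
  · calc (1:ℝ)/2 = ∫ t in (0:ℝ)..c, deriv ψ t * ψ t := hFTC.symm
      _ ≤ ∫ r in (0:ℝ)..c, G r :=
        intervalIntegral.integral_mono_on hc.le (hpc.intervalIntegrable _ _) (hGint 0 c) hlow
  · calc (∫ r in (0:ℝ)..c, G r) ≤ ∫ t in (0:ℝ)..c, (deriv ψ t * ψ t + 4) :=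
        intervalIntegral.integral_mono_on hc.le (hGint 0 c)
          ((hpc.add continuous_const).intervalIntegrable _ _) hup
      _ = (1/2) + 4 * c := by
          rw [intervalIntegral.integral_add (hpc.intervalIntegrable _ _)
            (intervalIntegrable_const), hFTC, intervalIntegral.integral_const]
          simp [mul_comm]

/-- area of a radial graph over the disc, in polar form -/
lemma area_radial_eq (ψ : ℝ → ℝ) (l : ℝ) (hl : 0 < l) (hsm : ContDiff ℝ (⊤ : ℕ∞) ψ)
    (M : ℝ) (hM : ∀ r ∈ Ioo (0:ℝ) l, |deriv ψ r| ≤ M ∧ |ψ r| ≤ 1) :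
    areaFun (fun z : ℂ => (ψ ‖z‖ * ‖z‖⁻¹) • z) (ball 0 l)
      = 2 * Real.pi *
        ∫ r in Ioo (0:ℝ) l, Real.sqrt ((1 + deriv ψ r^2) * (r^2 + ψ r^2)) := by
  have hdc : Continuous (deriv ψ) := hsm.continuous_deriv (by simp)
  apply radial_integral _
    (fun r => Real.sqrt (1 + (deriv ψ r^2 + (ψ r / r)^2) + (deriv ψ r * (ψ r / r))^2))
    _ l (Real.sqrt ((1 + M^2) * (l^2 + 1))) hl
  · intro z hz hzl
    obtain ⟨hg, hj⟩ := gradSq_jacDet_radial ψ hz ((hsm.differentiable (by simp)) _)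
      (fun w : ℂ => (ψ ‖w‖ * ‖w‖⁻¹) • w) Filter.EventuallyEq.rfl
    rw [hg, hj]
  · intro r hr
    have hr0 : (0:ℝ) < r := hr.1
    have hrr : r = Real.sqrt (r^2) := (Real.sqrt_sq hr0.le).symm
    rw [hrr]
    rw [← Real.sqrt_mul (sq_nonneg r)]
    rw [← Real.sqrt_sq hr0.le]
    congr 1
    have : Real.sqrt (r ^ 2) ^ 2 = r ^ 2 := by
      rw [Real.sq_sqrt (sq_nonneg r)]
    rw [this]
    field_simp
    rw [this]
    ring
  · apply Continuous.continuousOn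
    apply Real.continuous_sqrt.comp
    exact (continuous_const.add (hdc.pow 2)).mul
      ((continuous_pow 2).add (hsm.continuous.pow 2))
  · intro r hr
    obtain ⟨hM1, hM2⟩ := hM r hr
    rw [abs_of_nonneg (Real.sqrt_nonneg _)]
    apply Real.sqrt_le_sqrt
    have h1 : deriv ψ r^2 ≤ M^2 := sq_le_sq' (neg_le_of_abs_le hM1) (le_of_abs_le hM1)
    have h2 : ψ r^2 ≤ 1 := by
      have := sq_le_sq' (neg_le_of_abs_le hM2) (le_of_abs_le hM2)
      simpa using this
    have hr2 : r^2 ≤ l^2 := by nlinarith [hr.1, hr.2]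
    have step1 : (1 + deriv ψ r^2) * (r^2 + ψ r^2) ≤ (1 + M^2) * (r^2 + ψ r^2) :=
      mul_le_mul_of_nonneg_right (by linarith) (by positivity)
    have step2 : (1 + M^2) * (r^2 + ψ r^2) ≤ (1 + M^2) * (l^2 + 1) :=
      mul_le_mul_of_nonneg_left (by linarith) (by positivity)
    linarith

/-- the "two discs" sequence and the resulting upper bound
`Ā(u, B_l) ≤ ∫ √(1+|∇u|²) + π`. -/
theorem two_discs_sequence
    (l : ℝ) (hl : 0 < l) (u : ℂ → ℂ)
    (hu : ∀ z : ℂ, z ≠ 0 → u z = ‖z‖⁻¹ • z)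
    (φ : ℕ → ℝ → ℝ)
    (hsmooth : ∀ k : ℕ, 1 ≤ k → ContDiff ℝ (⊤ : ℕ∞) (φ k))
    (hval : ∀ k : ℕ, 1 ≤ k → ∀ t ∈ Icc (0 : ℝ) l, φ k t ∈ Icc (0 : ℝ) 1)
    (hzero : ∀ k : ℕ, 1 ≤ k → ∀ t ∈ Icc (0 : ℝ) (1 / (k : ℝ) ^ 2), φ k t = 0)
    (hone : ∀ k : ℕ, 1 ≤ k → ∀ t ∈ Icc (1 / (k : ℝ)) l, φ k t = 1)
    (hderiv : ∀ k : ℕ, 1 ≤ k → ∀ t ∈ Icc (0 : ℝ) l,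
      0 ≤ deriv (φ k) t ∧ deriv (φ k) t ≤ 2 * (k : ℝ)) :
    Tendsto (fun k => ∫ z in ball (0 : ℂ) l, ‖truncMap φ k z - u z‖)
      atTop (nhds 0) ∧
    Tendsto (fun k => areaFun (truncMap φ k) (ball 0 l)) atTop
      (nhds ((∫ z in ball (0 : ℂ) l, Real.sqrt (1 + gradSq u z)) + Real.pi)) ∧
    relaxedArea u (ball 0 l) ≤
      ENNReal.ofReal ((∫ z in ball (0 : ℂ) l, Real.sqrt (1 + gradSq u z)) +
        Real.pi) := by
  -- threshold
  obtain ⟨K₀, hK₀1, hK₀l⟩ : ∃ K₀ : ℕ, 1 ≤ K₀ ∧ ∀ k : ℕ, K₀ ≤ k → 1/(k:ℝ) ≤ l := by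
    refine ⟨⌈1/l⌉₊ + 1, le_add_self.trans (le_refl _), ?_⟩
    intro k hk
    have hk0 : (0:ℝ) < k := by
      have : 1 ≤ k := le_trans (Nat.le_add_left 1 _) hk
      exact_mod_cast this
    rw [div_le_iff₀ hk0]
    have h1 : 1/l ≤ (⌈1/l⌉₊ : ℝ) := Nat.le_ceil _
    have h2 : ((⌈1/l⌉₊ : ℕ) : ℝ) + 1 ≤ (k:ℝ) := by exact_mod_cast hk
    have : 1/l ≤ (k:ℝ) := by linarith
    calc (1:ℝ) = l * (1/l) := by field_simp
      _ ≤ l * k := by nlinarith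
  -- abbreviations
  set A : ℕ → ℝ := fun k => ∫ r in (0:ℝ)..(1/(k:ℝ)),
    Real.sqrt ((1 + deriv (φ k) r^2) * (r^2 + φ k r^2)) with hAdef
  set B : ℕ → ℝ := fun k => ∫ r in (1/(k:ℝ))..l, Real.sqrt (1 + r^2) with hBdef
  set T : ℝ := ∫ r in (0:ℝ)..l, Real.sqrt (1 + r^2) with hTdef
  have hsqc : Continuous (fun r : ℝ => Real.sqrt (1 + r^2)) :=
    Real.continuous_sqrt.comp (continuous_const.add (continuous_pow 2))
  have hTT : (∫ r in Ioo (0:ℝ) l, Real.sqrt (1 + r^2)) = T := by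
    rw [hTdef, intervalIntegral.integral_of_le hl.le, integral_Ioc_eq_integral_Ioo]
  -- the limiting area integral for the vortex map
  have htarget : (∫ z in ball (0:ℂ) l, Real.sqrt (1 + gradSq u z))
      = 2 * Real.pi * ∫ r in Ioo (0:ℝ) l, Real.sqrt (1 + r^2) := by
    apply radial_integral _ (fun r => Real.sqrt (1 + (1/r)^2)) _ l
      (Real.sqrt (1 + l^2)) hl
    · intro z hz hzl
      have hF : u =ᶠ[𝓝 z] fun w : ℂ => ((fun _ : ℝ => (1:ℝ)) ‖w‖ * ‖w‖⁻¹) • w := by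
        filter_upwards [IsOpen.mem_nhds isOpen_compl_singleton hz] with w hw
        rw [hu w hw, one_mul]
      obtain ⟨hg, _⟩ := gradSq_jacDet_radial (fun _ : ℝ => (1:ℝ)) hz
        (differentiableAt_const 1) u hF
      rw [hg]
      simp [one_div]
    · intro r hr
      have hrne : r ≠ 0 := hr.1.ne'
      have h : (1:ℝ) + r^2 = r^2 * (1 + (1/r)^2) := by field_simp; ring
      rw [h, Real.sqrt_mul (sq_nonneg r), Real.sqrt_sq hr.1.le]
    · exact hsqc.continuousOn
    · intro r hr
      rw [abs_of_nonneg (Real.sqrt_nonneg _)]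
      apply Real.sqrt_le_sqrt
      nlinarith [hr.1, hr.2]
  -- the area of `u_k` for `k ≥ K₀`
  have harea : ∀ k : ℕ, K₀ ≤ k →
      areaFun (truncMap φ k) (ball 0 l) = 2 * Real.pi * (A k + B k) := by
    intro k hk
    have hk1 : 1 ≤ k := hK₀1.trans hk
    have hk0 : (0:ℝ) < (k:ℝ) := by exact_mod_cast hk1
    have hckl : 1/(k:ℝ) ≤ l := hK₀l k hk
    have hck1 : 1/(k:ℝ) ≤ 1 := by
      rw [div_le_one hk0]
      exact_mod_cast hk1
    have hM : ∀ r ∈ Ioo (0:ℝ) l, |deriv (φ k) r| ≤ 2*(k:ℝ) ∧ |φ k r| ≤ 1 := by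
      intro r hr
      have hrl : r ∈ Icc (0:ℝ) l := ⟨hr.1.le, hr.2.le⟩
      obtain ⟨hd1, hd2⟩ := hderiv k hk1 r hrl
      obtain ⟨hv1, hv2⟩ := hval k hk1 r hrl
      constructor
      · rw [abs_of_nonneg hd1]; exact hd2
      · rw [abs_of_nonneg hv1]; exact hv2
    rw [truncMap_eq φ k, area_radial_eq (φ k) l hl (hsmooth k hk1) (2*(k:ℝ)) hM]
    have h1d := oneD (φ k) l (1/(k:ℝ)) hl (by positivity) hckl hck1
      (hsmooth k hk1) (hval k hk1)
      (hzero k hk1 0 ⟨le_refl 0, by positivity⟩)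
      (hone k hk1)
      (fun t ht => (hderiv k hk1 t ht).1)
      (fun t ht => by
        have := (hderiv k hk1 t ht).2
        have h2 : 2/(1/(k:ℝ)) = 2*(k:ℝ) := by field_simp
        rw [h2]; exact this)
    rw [h1d.1]
  -- bounds for A
  have hAbound : ∀ k : ℕ, K₀ ≤ k → 1/2 ≤ A k ∧ A k ≤ 1/2 + 4*(1/(k:ℝ)) := by
    intro k hk
    have hk1 : 1 ≤ k := hK₀1.trans hk
    have hk0 : (0:ℝ) < (k:ℝ) := by exact_mod_cast hk1
    have hckl : 1/(k:ℝ) ≤ l := hK₀l k hk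
    have hck1 : 1/(k:ℝ) ≤ 1 := by
      rw [div_le_one hk0]
      exact_mod_cast hk1
    have h1d := oneD (φ k) l (1/(k:ℝ)) hl (by positivity) hckl hck1
      (hsmooth k hk1) (hval k hk1)
      (hzero k hk1 0 ⟨le_refl 0, by positivity⟩)
      (hone k hk1)
      (fun t ht => (hderiv k hk1 t ht).1)
      (fun t ht => by
        have := (hderiv k hk1 t ht).2
        have h2 : 2/(1/(k:ℝ)) = 2*(k:ℝ) := by field_simp
        rw [h2]; exact this)
    exact ⟨h1d.2.1, h1d.2.2⟩
  -- limit of A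
  have hA : Tendsto A atTop (𝓝 (1/2)) := by
    have hup : Tendsto (fun k : ℕ => 1/2 + 4*(1/(k:ℝ))) atTop (𝓝 (1/2)) := by
      have := tendsto_one_div_atTop_nhds_zero_nat.const_mul (4:ℝ)
      have h2 := tendsto_const_nhds (x := (1:ℝ)/2) (f := atTop (α := ℕ)) |>.add this
      simpa using h2
    apply tendsto_of_tendsto_of_tendsto_of_le_of_le' tendsto_const_nhds hup
    · filter_upwards [eventually_ge_atTop K₀] with k hk
      exact (hAbound k hk).1
    · filter_upwards [eventually_ge_atTop K₀] with k hk
      exact (hAbound k hk).2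
  -- limit of B
  have hD : Tendsto (fun k : ℕ => ∫ r in (0:ℝ)..(1/(k:ℝ)), Real.sqrt (1 + r^2))
      atTop (𝓝 0) := by
    apply squeeze_zero_norm' (a := fun k : ℕ => Real.sqrt 2 * (1/(k:ℝ)))
    · filter_upwards [eventually_ge_atTop 1] with k hk
      have hk0 : (0:ℝ) < (k:ℝ) := by exact_mod_cast hk
      have hb : ∀ x ∈ Set.uIoc (0:ℝ) (1/(k:ℝ)), ‖Real.sqrt (1 + x^2)‖ ≤ Real.sqrt 2 := by
        intro x hx
        rw [uIoc_of_le (by positivity)] at hx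
        rw [Real.norm_eq_abs, abs_of_nonneg (Real.sqrt_nonneg _)]
        apply Real.sqrt_le_sqrt
        have hx1 : x ≤ 1 := hx.2.trans (by
          rw [div_le_one hk0]; exact_mod_cast hk)
        nlinarith [hx.1]
      have := intervalIntegral.norm_integral_le_of_norm_le_const (f := fun x : ℝ => Real.sqrt (1+x^2)) (a := 0) (b := 1/(k:ℝ)) hb
      rwa [sub_zero, abs_of_nonneg (by positivity : (0:ℝ) ≤ 1/(k:ℝ))] at this
    · have := tendsto_one_div_atTop_nhds_zero_nat.const_mul (Real.sqrt 2)
      simpa using this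
  have hBsub : ∀ k : ℕ, B k = T - ∫ r in (0:ℝ)..(1/(k:ℝ)), Real.sqrt (1 + r^2) := by
    intro k
    have := intervalIntegral.integral_add_adjacent_intervals
      (hsqc.intervalIntegrable (μ := volume) 0 (1/(k:ℝ)))
      (hsqc.intervalIntegrable (μ := volume) (1/(k:ℝ)) l)
    rw [hBdef, hTdef]
    dsimp only
    linarith [this]
  have hB : Tendsto B atTop (𝓝 T) := by
    have h := tendsto_const_nhds (x := T) (f := atTop (α := ℕ)) |>.sub hD
    rw [sub_zero] at h
    apply h.congr
    intro k
    rw [hBsub k]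
  -- limit of the areas
  have hABlim : Tendsto (fun k => 2 * Real.pi * (A k + B k)) atTop
      (𝓝 (2 * Real.pi * (1/2 + T))) := (hA.add hB).const_mul _
  have hval2 : (∫ z in ball (0:ℂ) l, Real.sqrt (1 + gradSq u z)) + Real.pi
      = 2 * Real.pi * (1/2 + T) := by
    rw [htarget, hTT]; ring
  have hAreaTendsto : Tendsto (fun k => areaFun (truncMap φ k) (ball 0 l)) atTop
      (nhds ((∫ z in ball (0 : ℂ) l, Real.sqrt (1 + gradSq u z)) + Real.pi)) := by
    rw [hval2]
    apply hABlim.congr'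
    filter_upwards [eventually_ge_atTop K₀] with k hk
    exact (harea k hk).symm
  -- L¹ convergence
  have hL1 : Tendsto (fun k => ∫ z in ball (0 : ℂ) l, ‖truncMap φ k z - u z‖)
      atTop (nhds 0) := by
    apply squeeze_zero_norm' (a := fun k : ℕ => Real.pi * (1/(k:ℝ))^2)
    · filter_upwards [eventually_ge_atTop K₀] with k hk
      have hk1 : 1 ≤ k := hK₀1.trans hk
      have hk0 : (0:ℝ) < (k:ℝ) := by exact_mod_cast hk1
      have hckl : 1/(k:ℝ) ≤ l := hK₀l k hk
      set h : ℂ → ℝ := fun z => ‖truncMap φ k z - ‖z‖⁻¹ • z‖ with hhdef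
      have hae : ∫ z in ball (0:ℂ) l, ‖truncMap φ k z - u z‖
          = ∫ z in ball (0:ℂ) l, h z := by
        apply setIntegral_congr_ae measurableSet_ball
        have h0 : ∀ᵐ z : ℂ ∂volume, z ≠ 0 := by
          rw [ae_iff]
          simp only [not_not]
          have : {z : ℂ | z = 0} = {0} := by ext w; simp
          rw [this]
          exact measure_singleton 0
        filter_upwards [h0] with z hz _
        rw [hhdef]
        dsimp only
        rw [hu z hz]
      have hind : ∀ z ∈ ball (0:ℂ) l, h z = (ball (0:ℂ) (1/(k:ℝ))).indicator h z := by
        intro z hzl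
        by_cases hzk : z ∈ ball (0:ℂ) (1/(k:ℝ))
        · rw [indicator_of_mem hzk]
        · rw [indicator_of_notMem hzk]
          have hz0 : z ≠ 0 := by
            intro h0
            apply hzk
            rw [h0, mem_ball, dist_self]
            positivity
          have hnz : 1/(k:ℝ) ≤ ‖z‖ := by
            rw [mem_ball, dist_zero_right, not_lt] at hzk
            exact hzk
          have hnzl : ‖z‖ ≤ l := by
            rw [mem_ball, dist_zero_right] at hzl
            exact hzl.le
          have hφ1 : φ k ‖z‖ = 1 := hone k hk1 ‖z‖ ⟨hnz, hnzl⟩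
          rw [hhdef]
          dsimp only
          rw [truncMap_eq φ k]
          dsimp only
          rw [hφ1, one_mul, sub_self, norm_zero]
      rw [hae, setIntegral_congr_fun measurableSet_ball hind,
        setIntegral_indicator measurableSet_ball]
      have hfin : volume (ball (0:ℂ) l ∩ ball (0:ℂ) (1/(k:ℝ))) < ⊤ :=
        (measure_mono inter_subset_left).trans_lt (by
          rw [Complex.volume_ball]
          exact ENNReal.mul_lt_top (ENNReal.pow_lt_top ENNReal.ofReal_lt_top)
            ENNReal.coe_lt_top)
      have hCbound : ∀ z ∈ ball (0:ℂ) l ∩ ball (0:ℂ) (1/(k:ℝ)), ‖h z‖ ≤ 1 := by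
        rintro z ⟨hzl, _⟩
        rw [hhdef]
        dsimp only
        rw [norm_norm]
        rcases eq_or_ne z 0 with rfl | hz0
        · simp [truncMap]
        · have hn : ‖z‖ ≠ 0 := norm_ne_zero_iff.2 hz0
          have hnzl : ‖z‖ ≤ l := by
            rw [mem_ball, dist_zero_right] at hzl
            exact hzl.le
          obtain ⟨hv0, hv1⟩ := hval k hk1 ‖z‖ ⟨norm_nonneg z, hnzl⟩
          rw [truncMap_eq φ k]
          dsimp only
          have : (φ k ‖z‖ * ‖z‖⁻¹) • z - ‖z‖⁻¹ • z = ((φ k ‖z‖ - 1) * ‖z‖⁻¹) • z := by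
            rw [sub_mul, one_mul, sub_smul]
          rw [this, norm_smul, Real.norm_eq_abs, abs_mul, abs_inv, abs_norm]
          rw [mul_assoc, inv_mul_cancel₀ hn, mul_one]
          rw [abs_le]
          constructor <;> linarith
      have hvol : (volume (ball (0:ℂ) l ∩ ball (0:ℂ) (1/(k:ℝ)))).toReal
          ≤ Real.pi * (1/(k:ℝ))^2 := by
        have h1 : volume (ball (0:ℂ) l ∩ ball (0:ℂ) (1/(k:ℝ)))
            ≤ volume (ball (0:ℂ) (1/(k:ℝ))) := measure_mono inter_subset_right
        have h2 : (volume (ball (0:ℂ) (1/(k:ℝ)))).toReal = Real.pi * (1/(k:ℝ))^2 := by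
          rw [Complex.volume_ball, ENNReal.toReal_mul, ENNReal.toReal_pow,
            ENNReal.toReal_ofReal (by positivity)]
          simp [mul_comm]
        rw [← h2]
        exact ENNReal.toReal_mono (by
          rw [Complex.volume_ball]
          exact (ENNReal.mul_lt_top (ENNReal.pow_lt_top ENNReal.ofReal_lt_top)
            ENNReal.coe_lt_top).ne) h1
      calc ‖∫ z in ball (0:ℂ) l ∩ ball (0:ℂ) (1/(k:ℝ)), h z‖
          ≤ 1 * (volume (ball (0:ℂ) l ∩ ball (0:ℂ) (1/(k:ℝ)))).toReal :=
            norm_setIntegral_le_of_norm_le_const hfin hCbound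
        _ ≤ Real.pi * (1/(k:ℝ))^2 := by rw [one_mul]; exact hvol
    · have h1 : Tendsto (fun k : ℕ => (1/(k:ℝ))^2) atTop (𝓝 0) := by
        have := (tendsto_one_div_atTop_nhds_zero_nat (𝕜 := ℝ)).pow 2
        simpa using this
      have := h1.const_mul Real.pi
      simpa using this
  refine ⟨hL1, hAreaTendsto, ?_⟩
  -- the relaxed area bound
  apply sInf_le
  refine ⟨fun k => truncMap φ (k + K₀), ?_, ?_, ?_⟩
  · intro k
    have hk1' : 1 ≤ k + K₀ := hK₀1.trans (Nat.le_add_left K₀ k)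
    show ContDiffOn ℝ 1 (truncMap φ (k + K₀)) (ball 0 l)
    rw [truncMap_eq φ (k + K₀)]
    have hpos : (0:ℝ) < 1/((k + K₀ : ℕ):ℝ)^2 := by
      have : (0:ℝ) < ((k + K₀ : ℕ):ℝ) := by exact_mod_cast hk1'
      positivity
    exact (contDiff_radial (φ (k + K₀)) (hsmooth _ hk1') _ hpos
      (hzero _ hk1')).contDiffOn
  · exact hL1.comp (tendsto_add_atTop_nat K₀)
  · have h := hAreaTendsto.comp (tendsto_add_atTop_nat K₀)
    have h2 := ENNReal.tendsto_ofReal h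
    exact h2.liminf_eq.symm
end
end
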